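/- Let (S,⊣,⊢,⊥,γ,ξ) be a BiHom-associative trialgebra over a field F, let s, r, s′, r′ be nonnegative integers, let δ be a (γ^s ξ^r)-quasiderivation of S and let c be a (γ^{s′} ξ^{r′})-quasicentroid element of S. Then the commutator [δ,c] = δ∘c − c∘δ is a (γ^{s+s′} ξ^{r+r′})-quasicentroid element of S; that is, [QD(S), QC(S)] ⊆ QC(S). -/
import Mathlib


/-- A BiHom-associative trialgebra structure on a vector space `S` over a field `F`,
given by three bilinear operations `l` (⊣), `r` (⊢), `m` (⊥) and two linear maps `γ`, `ξ`. -/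
structure IsBiHomTrialgebra (F : Type*) [Field F] {S : Type*} [AddCommGroup S] [Module F S]
    (l r m : S → S → S) (γ ξ : S → S) : Prop where
  l_add_left : ∀ x y z : S, l (x + y) z = l x z + l y z
  l_add_right : ∀ x y z : S, l x (y + z) = l x y + l x z
  l_smul_left : ∀ (a : F) (x y : S), l (a • x) y = a • l x y
  l_smul_right : ∀ (a : F) (x y : S), l x (a • y) = a • l x y
  r_add_left : ∀ x y z : S, r (x + y) z = r x z + r y z
  r_add_right : ∀ x y z : S, r x (y + z) = r x y + r x z
  r_smul_left : ∀ (a : F) (x y : S), r (a • x) y = a • r x y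
  r_smul_right : ∀ (a : F) (x y : S), r x (a • y) = a • r x y
  m_add_left : ∀ x y z : S, m (x + y) z = m x z + m y z
  m_add_right : ∀ x y z : S, m x (y + z) = m x y + m x z
  m_smul_left : ∀ (a : F) (x y : S), m (a • x) y = a • m x y
  m_smul_right : ∀ (a : F) (x y : S), m x (a • y) = a • m x y
  gamma_linear : IsLinearMap F γ
  xi_linear : IsLinearMap F ξ
  gamma_xi_comm : ∀ x : S, γ (ξ x) = ξ (γ x)
  gamma_l : ∀ x y : S, γ (l x y) = l (γ x) (γ y)
  gamma_r : ∀ x y : S, γ (r x y) = r (γ x) (γ y)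
  gamma_m : ∀ x y : S, γ (m x y) = m (γ x) (γ y)
  xi_l : ∀ x y : S, ξ (l x y) = l (ξ x) (ξ y)
  xi_r : ∀ x y : S, ξ (r x y) = r (ξ x) (ξ y)
  xi_m : ∀ x y : S, ξ (m x y) = m (ξ x) (ξ y)
  ax1 : ∀ x y z : S, l (l x y) (ξ z) = l (γ x) (l y z)
  ax2 : ∀ x y z : S, l (γ x) (l y z) = l (γ x) (r y z)
  ax3 : ∀ x y z : S, l (γ x) (r y z) = l (γ x) (m y z)
  ax4 : ∀ x y z : S, l (r x y) (ξ z) = r (γ x) (l y z)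
  ax5 : ∀ x y z : S, r (l x y) (ξ z) = r (γ x) (r y z)
  ax6 : ∀ x y z : S, r (r x y) (ξ z) = r (γ x) (r y z)
  ax7 : ∀ x y z : S, r (m x y) (ξ z) = r (γ x) (r y z)
  ax8 : ∀ x y z : S, l (m x y) (ξ z) = m (γ x) (l y z)
  ax9 : ∀ x y z : S, m (l x y) (ξ z) = m (γ x) (r y z)
  ax10 : ∀ x y z : S, m (r x y) (ξ z) = r (γ x) (m y z)
  ax11 : ∀ x y z : S, m (m x y) (ξ z) = m (γ x) (m y z)

/-- A `(γ^s ξ^r)`-quasiderivation of a BiHom-associative trialgebra. -/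
def IsGsxQuasiDerivation (F : Type*) [Field F] {S : Type*} [AddCommGroup S] [Module F S]
    (l r m : S → S → S) (γ ξ : S → S) (s t : ℕ) (δ : S → S) : Prop :=
  IsLinearMap F δ ∧ (∀ x, δ (γ x) = γ (δ x)) ∧ (∀ x, δ (ξ x) = ξ (δ x))
  ∧ ∃ δ' : S → S, IsLinearMap F δ' ∧ (∀ x, δ' (γ x) = γ (δ' x)) ∧ (∀ x, δ' (ξ x) = ξ (δ' x))
      ∧ (∀ x y, δ' (l x y) = l (δ x) (γ^[s] (ξ^[t] y)) + l (γ^[s] (ξ^[t] x)) (δ y))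
      ∧ (∀ x y, δ' (r x y) = r (δ x) (γ^[s] (ξ^[t] y)) + r (γ^[s] (ξ^[t] x)) (δ y))
      ∧ (∀ x y, δ' (m x y) = m (δ x) (γ^[s] (ξ^[t] y)) + m (γ^[s] (ξ^[t] x)) (δ y))

/-- A `(γ^s ξ^r)`-quasicentroid element of a BiHom-associative trialgebra. -/
def IsGsxQuasiCentroid (F : Type*) [Field F] {S : Type*} [AddCommGroup S] [Module F S]
    (l r m : S → S → S) (γ ξ : S → S) (s t : ℕ) (c : S → S) : Prop :=
  IsLinearMap F c ∧ (∀ x, c (γ x) = γ (c x)) ∧ (∀ x, c (ξ x) = ξ (c x))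
  ∧ (∀ x y : S, l (c x) (γ^[s] (ξ^[t] y)) = l (γ^[s] (ξ^[t] x)) (c y))
  ∧ (∀ x y : S, r (c x) (γ^[s] (ξ^[t] y)) = r (γ^[s] (ξ^[t] x)) (c y))
  ∧ (∀ x y : S, m (c x) (γ^[s] (ξ^[t] y)) = m (γ^[s] (ξ^[t] x)) (c y))

private lemma comm_iter {S : Type*} (f g : S → S) (hfg : ∀ x, f (g x) = g (f x)) :
    ∀ (n : ℕ) (x : S), f (g^[n] x) = g^[n] (f x) := by
  intro n
  induction n with
  | zero => intro x; simp
  | succ k ih =>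
    intro x
    rw [Function.iterate_succ_apply', hfg, ih, Function.iterate_succ_apply']

private lemma key_op {F : Type*} [Field F] {S : Type*} [AddCommGroup S] [Module F S]
    (p : S → S → S) (γ ξ : S → S)
    (padd : ∀ x y z : S, p (x + y) z = p x z + p y z)
    (padd' : ∀ x y z : S, p x (y + z) = p x y + p x z)
    (psmul : ∀ (a : F) (x y : S), p (a • x) y = a • p x y)
    (psmul' : ∀ (a : F) (x y : S), p x (a • y) = a • p x y)
    (hγξ : ∀ x, γ (ξ x) = ξ (γ x))
    (s t s' t' : ℕ) (δ δ' c : S → S)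
    (hδγ : ∀ x, δ (γ x) = γ (δ x)) (hδξ : ∀ x, δ (ξ x) = ξ (δ x))
    (hcγ : ∀ x, c (γ x) = γ (c x)) (hcξ : ∀ x, c (ξ x) = ξ (c x))
    (hcent : ∀ x y, p (c x) (γ^[s'] (ξ^[t'] y)) = p (γ^[s'] (ξ^[t'] x)) (c y))
    (hδ' : ∀ x y, δ' (p x y) = p (δ x) (γ^[s] (ξ^[t] y)) + p (γ^[s] (ξ^[t] x)) (δ y)) :
    ∀ x y : S, p (δ (c x) - c (δ x)) (γ^[s + s'] (ξ^[t + t'] y))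
      = p (γ^[s + s'] (ξ^[t + t'] x)) (δ (c y) - c (δ y)) := by
  have hgx : ∀ (a b : ℕ) (x : S), γ^[a] (ξ^[b] x) = ξ^[b] (γ^[a] x) := by
    intro a b x
    exact comm_iter (γ^[a]) ξ (fun z => (comm_iter ξ γ (fun w => (hγξ w).symm) a z).symm) b x
  have hγγ : ∀ (a b : ℕ) (x : S), γ^[a] (γ^[b] x) = γ^[b] (γ^[a] x) := by
    intro a b x
    rw [← Function.iterate_add_apply, ← Function.iterate_add_apply, Nat.add_comm]
  have hξξ : ∀ (a b : ℕ) (x : S), ξ^[a] (ξ^[b] x) = ξ^[b] (ξ^[a] x) := by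
    intro a b x
    rw [← Function.iterate_add_apply, ← Function.iterate_add_apply, Nat.add_comm]
  have hT12 : ∀ x : S, γ^[s + s'] (ξ^[t + t'] x) = γ^[s] (ξ^[t] (γ^[s'] (ξ^[t'] x))) := by
    intro x
    rw [Function.iterate_add_apply γ s s', Function.iterate_add_apply ξ t t', hgx s' t]
  have hT12' : ∀ x : S,
      γ^[s] (ξ^[t] (γ^[s'] (ξ^[t'] x))) = γ^[s'] (ξ^[t'] (γ^[s] (ξ^[t] x))) := by
    intro x
    rw [← hgx s' t, ← hgx s t', hγγ s s', hξξ t t']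
  have hδT2 : ∀ x, δ (γ^[s'] (ξ^[t'] x)) = γ^[s'] (ξ^[t'] (δ x)) := fun x => by
    rw [comm_iter δ γ hδγ s', comm_iter δ ξ hδξ t']
  have hcT1 : ∀ x, c (γ^[s] (ξ^[t] x)) = γ^[s] (ξ^[t] (c x)) := fun x => by
    rw [comm_iter c γ hcγ s, comm_iter c ξ hcξ t]
  have hpsub : ∀ x y z : S, p (x - y) z = p x z - p y z := by
    intro x y z
    have hx : x - y = x + (-1 : F) • y := by rw [neg_one_smul, sub_eq_add_neg]
    rw [hx, padd, psmul, neg_one_smul, ← sub_eq_add_neg]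
  have hpsub' : ∀ x y z : S, p x (y - z) = p x y - p x z := by
    intro x y z
    have hx : y - z = y + (-1 : F) • z := by rw [neg_one_smul, sub_eq_add_neg]
    rw [hx, padd', psmul', neg_one_smul, ← sub_eq_add_neg]
  intro x y
  have E : p (δ (c x)) (γ^[s] (ξ^[t] (γ^[s'] (ξ^[t'] y))))
        + p (γ^[s] (ξ^[t] (c x))) (γ^[s'] (ξ^[t'] (δ y)))
      = p (γ^[s'] (ξ^[t'] (δ x))) (γ^[s] (ξ^[t] (c y)))
        + p (γ^[s] (ξ^[t] (γ^[s'] (ξ^[t'] x)))) (δ (c y)) := by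
    have e1 := hδ' (c x) (γ^[s'] (ξ^[t'] y))
    have e2 := hδ' (γ^[s'] (ξ^[t'] x)) (c y)
    rw [hcent x y] at e1
    rw [e1] at e2
    rw [hδT2 y, hδT2 x] at e2
    exact e2
  have E2 : p (γ^[s] (ξ^[t] (c x))) (γ^[s'] (ξ^[t'] (δ y)))
      = p (γ^[s'] (ξ^[t'] (γ^[s] (ξ^[t] x)))) (c (δ y)) := by
    rw [← hcT1 x]; exact hcent (γ^[s] (ξ^[t] x)) (δ y)
  have E3 : p (γ^[s'] (ξ^[t'] (δ x))) (γ^[s] (ξ^[t] (c y)))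
      = p (c (δ x)) (γ^[s'] (ξ^[t'] (γ^[s] (ξ^[t] y)))) := by
    rw [← hcT1 y]; exact (hcent (δ x) (γ^[s] (ξ^[t] y))).symm
  rw [hT12 x, hT12 y, hpsub, hpsub']
  rw [E2, E3, hT12' x, hT12' y] at E
  rw [hT12' x, hT12' y]
  rw [sub_eq_sub_iff_add_eq_add, E, add_comm]

/-- The commutator of a `(γ^s ξ^r)`-quasiderivation and a `(γ^{s'} ξ^{r'})`-quasicentroid
element is a `(γ^{s+s'} ξ^{r+r'})`-quasicentroid element: `[QD(S), QC(S)] ⊆ QC(S)`. -/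

theorem commutator_quasiderivation_quasicentroid
    (F : Type*) [Field F] {S : Type*} [AddCommGroup S] [Module F S]
    (l r m : S → S → S) (γ ξ : S → S)
    (h : IsBiHomTrialgebra F l r m γ ξ)
    (s t s' t' : ℕ) (δ c : S → S)
    (hδ : IsGsxQuasiDerivation F l r m γ ξ s t δ)
    (hc : IsGsxQuasiCentroid F l r m γ ξ s' t' c) :
    IsGsxQuasiCentroid F l r m γ ξ (s + s') (t + t') (fun x => δ (c x) - c (δ x)) := by
  obtain ⟨hδlin, hδγ, hδξ, δ', hδ'lin, hδ'γ, hδ'ξ, hδ'l, hδ'r, hδ'm⟩ := hδ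
  obtain ⟨hclin, hcγ, hcξ, hcl, hcr, hcm⟩ := hc
  refine ⟨?_, ?_, ?_, ?_, ?_, ?_⟩
  · constructor
    · intro a b
      simp only [hδlin.map_add, hclin.map_add]
      abel
    · intro a b
      simp only [hδlin.map_smul, hclin.map_smul, smul_sub]
  · intro x
    show δ (c (γ x)) - c (δ (γ x)) = γ (δ (c x) - c (δ x))
    rw [hcγ, hδγ, hδγ, hcγ]
    have hx : δ (c x) - c (δ x) = δ (c x) + (-1 : F) • c (δ x) := by
      rw [neg_one_smul, sub_eq_add_neg]
    rw [hx, h.gamma_linear.map_add, h.gamma_linear.map_smul, neg_one_smul, ← sub_eq_add_neg]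
  · intro x
    show δ (c (ξ x)) - c (δ (ξ x)) = ξ (δ (c x) - c (δ x))
    rw [hcξ, hδξ, hδξ, hcξ]
    have hx : δ (c x) - c (δ x) = δ (c x) + (-1 : F) • c (δ x) := by
      rw [neg_one_smul, sub_eq_add_neg]
    rw [hx, h.xi_linear.map_add, h.xi_linear.map_smul, neg_one_smul, ← sub_eq_add_neg]
  · exact key_op l γ ξ h.l_add_left h.l_add_right h.l_smul_left h.l_smul_right
      h.gamma_xi_comm s t s' t' δ δ' c hδγ hδξ hcγ hcξ hcl hδ'l
  · exact key_op r γ ξ h.r_add_left h.r_add_right h.r_smul_left h.r_smul_right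
      h.gamma_xi_comm s t s' t' δ δ' c hδγ hδξ hcγ hcξ hcr hδ'r
  · exact key_op m γ ξ h.m_add_left h.m_add_right h.m_smul_left h.m_smul_right
      h.gamma_xi_comm s t s' t' δ δ' c hδγ hδξ hcγ hcξ hcm hδ'm
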